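/- Let θ be a real number with sin θ ≠ 0, and let x, y be real numbers such that |x − y·cot θ| < π/(2√2) and |y/sin θ| < √(π/2). Then log( cos(y/sin θ) / cos(x − y·cot θ) ) = ∑_{k=1}^∞ [ L_k(1, (x − y·cot θ)²/(c_k² − (x − y·cot θ)²)) − M_k(1, (y/(c_k·sin θ))²) ], where the outer series converges. -/

import Mathlib

open Real Filter Finset Topology

/-!
Splitting Euler's sine product at `2u` into even- and odd-indexed factors and comparing with
`sin 2u = 2 sin u cos u` gives `cos u = ∏ₖ (1 - u² / cₖ²)`, so `log cos u = ∑ₖ log (1 - u² / cₖ²)`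
for `|u| < π/2`. With `u = x - y cot θ` and `v = y / sin θ` the bounds give `2u² < cₖ²` and
`v² < cₖ²`; the Mercator series then evaluate the `k`-th summand to
`log (1 + u² / (cₖ² - u²)) + log (1 - v² / cₖ²) = log (1 - v² / cₖ²) - log (1 - u² / cₖ²)`,
and summing over `k` gives `log cos v - log cos u`.
-/

theorem prod_range_two_mul {M : Type*} [CommMonoid M] (f : ℕ → M) (n : ℕ) :
    ∏ j ∈ range (2 * n), f j = (∏ k ∈ range n, f (2 * k)) * ∏ k ∈ range n, f (2 * k + 1) := by
  induction n with
  | zero => simp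
  | succ n ih =>
    rw [show 2 * (n + 1) = 2 * n + 1 + 1 by ring, prod_range_succ, prod_range_succ, ih,
      prod_range_succ, prod_range_succ]
    ac_rfl

theorem tendsto_mul_prod_one_sub_sq_div_sq_mul_pi (u : ℝ) :
    Tendsto (fun n : ℕ => u * ∏ j ∈ range n, (1 - u ^ 2 / (((j : ℝ) + 1) * π) ^ 2))
      atTop (𝓝 (sin u)) := by
  convert Real.tendsto_euler_sin_prod (u / π) using 2 with n
  · rw [mul_div_cancel₀ _ pi_ne_zero]
    congr! 2 with j
    rw [div_pow, div_div, mul_pow, mul_comm (π ^ 2)]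
  · rw [mul_div_cancel₀ _ pi_ne_zero]

theorem tendsto_prod_one_sub_sq_div_cos {u : ℝ} (hu : sin u ≠ 0) :
    Tendsto (fun n : ℕ => ∏ k ∈ range n, (1 - u ^ 2 / (((k : ℝ) + 1 / 2) * π) ^ 2))
      atTop (𝓝 (cos u)) := by
  set C := fun n : ℕ => ∏ k ∈ range n, (1 - u ^ 2 / (((k : ℝ) + 1 / 2) * π) ^ 2)
  set S := fun n : ℕ => u * ∏ j ∈ range n, (1 - u ^ 2 / (((j : ℝ) + 1) * π) ^ 2)
  -- The even-indexed factors of the sine product at `2u` are the cosine factors and the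
  -- odd-indexed ones form the sine product at `u`.
  have hdouble : ∀ n, 2 * u * ∏ j ∈ range (2 * n), (1 - (2 * u) ^ 2 / (((j : ℝ) + 1) * π) ^ 2)
      = 2 * S n * C n := by
    intro n
    rw [prod_range_two_mul]
    have heven : ∀ k : ℕ, 1 - (2 * u) ^ 2 / ((((2 * k : ℕ) : ℝ) + 1) * π) ^ 2
        = 1 - u ^ 2 / (((k : ℝ) + 1 / 2) * π) ^ 2 := by
      intro k; push_cast; field_simp
    have hodd : ∀ k : ℕ, 1 - (2 * u) ^ 2 / ((((2 * k + 1 : ℕ) : ℝ) + 1) * π) ^ 2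
        = 1 - u ^ 2 / (((k : ℝ) + 1) * π) ^ 2 := by
      intro k; push_cast; field_simp; ring
    simp only [heven, hodd, S, C]
    ring
  have hS2 : Tendsto (fun n => 2 * S n) atTop (𝓝 (2 * sin u)) :=
    (tendsto_mul_prod_one_sub_sq_div_sq_mul_pi u).const_mul 2
  have hSC : Tendsto (fun n => 2 * S n * C n) atTop (𝓝 (sin (2 * u))) :=
    ((tendsto_mul_prod_one_sub_sq_div_sq_mul_pi (2 * u)).comp
      (tendsto_id.const_mul_atTop' two_pos)).congr hdouble
  have hlim := hSC.div hS2 (mul_ne_zero two_ne_zero hu)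
  rw [sin_two_mul, mul_div_cancel_left₀ _ (mul_ne_zero two_ne_zero hu)] at hlim
  refine hlim.congr' ?_
  filter_upwards [hS2.eventually_ne (mul_ne_zero two_ne_zero hu)] with n hn
  exact mul_div_cancel_left₀ _ hn

theorem pi_div_two_le_add_half_mul_pi (k : ℕ) : π / 2 ≤ ((k : ℝ) + 1 / 2) * π := by
  nlinarith [pi_pos, (Nat.cast_nonneg k : (0 : ℝ) ≤ k)]

theorem summable_sq_div_add_half_mul_pi_sq (u : ℝ) :
    Summable fun k : ℕ => u ^ 2 / (((k : ℝ) + 1 / 2) * π) ^ 2 := by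
  have h := ((Real.summable_one_div_nat_add_rpow (1 / 2) 2).2 one_lt_two).mul_left (u ^ 2 / π ^ 2)
  refine h.congr fun k => ?_
  rw [rpow_two, sq_abs, mul_pow]
  field_simp

theorem hasSum_log_one_sub_sq_div_log_cos {u : ℝ} (hu : |u| < π / 2) :
    HasSum (fun k : ℕ => log (1 - u ^ 2 / (((k : ℝ) + 1 / 2) * π) ^ 2)) (log (cos u)) := by
  rcases eq_or_ne u 0 with rfl | hu0
  · simp
  have hsin : sin u ≠ 0 := by
    rw [Ne, sin_eq_zero_iff_of_lt_of_lt (by linarith [(abs_lt.1 hu).1, pi_pos])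
      (by linarith [(abs_lt.1 hu).2, pi_pos])]
    exact hu0
  have hfactor : ∀ k : ℕ, 0 < 1 - u ^ 2 / (((k : ℝ) + 1 / 2) * π) ^ 2 := fun k => by
    have hk := pi_div_two_le_add_half_mul_pi k
    rw [sub_pos, div_lt_one (by positivity)]
    exact sq_lt_sq' (by linarith [(abs_lt.1 hu).1]) (by linarith [(abs_lt.1 hu).2])
  have hsummable : Summable fun k : ℕ => log (1 - u ^ 2 / (((k : ℝ) + 1 / 2) * π) ^ 2) := by
    simpa only [sub_eq_add_neg] using
      Real.summable_log_one_add_of_summable (summable_sq_div_add_half_mul_pi_sq u).neg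
  rw [hsummable.hasSum_iff_tendsto_nat]
  have hcos : 0 < cos u := cos_pos_of_mem_Ioo (abs_lt.1 hu)
  refine (((continuousAt_log hcos.ne').tendsto).comp
    (tendsto_prod_one_sub_sq_div_cos hsin)).congr fun n => ?_
  exact log_prod fun k _ => (hfactor k).ne'

theorem hasSum_alternating_pow_div_log_one_add {a : ℝ} (ha : |a| < 1) :
    HasSum (fun n : ℕ => (-1) ^ n * a ^ (n + 1) / (n + 1)) (log (1 + a)) := by
  have h := (hasSum_pow_div_log_of_abs_lt_one (x := -a) (by rwa [abs_neg])).neg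
  rw [sub_neg_eq_add, neg_neg] at h
  refine h.congr_fun fun n => ?_
  rw [neg_pow a, pow_succ (-1 : ℝ)]
  ring

theorem log_one_add_div_sub {a b : ℝ} (hb : b ≠ 0) (hab : a ≠ b) :
    log (1 + a / (b - a)) = -log (1 - a / b) := by
  rw [← log_inv]
  congr 1
  have : b - a ≠ 0 := sub_ne_zero.2 hab.symm
  field_simp
  ring

theorem tsum_alternating_sub_tsum_eq_log_sub_log {u v c : ℝ} (hu : 2 * u ^ 2 < c ^ 2)
    (hv : v ^ 2 < c ^ 2) :
    (∑' n : ℕ, (-1 : ℝ) ^ n * (u ^ 2 / (c ^ 2 - u ^ 2)) ^ (n + 1) / ((n : ℝ) + 1)) -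
        ∑' n : ℕ, ((v / c) ^ 2) ^ (n + 1) / ((n : ℝ) + 1) =
      log (1 - v ^ 2 / c ^ 2) - log (1 - u ^ 2 / c ^ 2) := by
  have hc : 0 < c ^ 2 := (sq_nonneg v).trans_lt hv
  have hcu : 0 < c ^ 2 - u ^ 2 := by nlinarith [sq_nonneg u]
  have ha : |u ^ 2 / (c ^ 2 - u ^ 2)| < 1 := by
    rw [abs_of_nonneg (by positivity), div_lt_one hcu]
    linarith
  have hb : |(v / c) ^ 2| < 1 := by
    rwa [abs_of_nonneg (sq_nonneg _), div_pow, div_lt_one hc]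
  rw [(hasSum_alternating_pow_div_log_one_add ha).tsum_eq,
    (hasSum_pow_div_log_of_abs_lt_one hb).tsum_eq,
    log_one_add_div_sub hc.ne' (sub_pos.1 hcu).ne, div_pow]
  ring

theorem twisted_euler_ramanujan_dirichlet_general (θ x y : ℝ)
    (hx : |x - y * Real.cot θ| < Real.pi / (2 * Real.sqrt 2))
    (hy : |y / Real.sin θ| < Real.sqrt (Real.pi / 2)) :
    HasSum
      (fun k : ℕ =>
        (∑' n : ℕ, (-1 : ℝ) ^ n *
            ((x - y * Real.cot θ) ^ 2 /
              ((((k : ℝ) + 1 / 2) * Real.pi) ^ 2 - (x - y * Real.cot θ) ^ 2)) ^ (n + 1) /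
            ((n : ℝ) + 1)) -
        (∑' n : ℕ,
            ((y / ((((k : ℝ) + 1 / 2) * Real.pi) * Real.sin θ)) ^ 2) ^ (n + 1) /
            ((n : ℝ) + 1)))
      (Real.log (Real.cos (y / Real.sin θ) / Real.cos (x - y * Real.cot θ))) := by
  set u := x - y * cot θ
  set v := y / sin θ
  have hu : 2 * u ^ 2 < (π / 2) ^ 2 := by
    have h := pow_lt_pow_left₀ hx (abs_nonneg u) two_ne_zero
    rw [sq_abs, div_pow, mul_pow, sq_sqrt zero_le_two] at h
    linarith
  have hv : v ^ 2 < (π / 2) ^ 2 := by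
    have h := pow_lt_pow_left₀ hy (abs_nonneg v) two_ne_zero
    rw [sq_abs, sq_sqrt (by positivity)] at h
    nlinarith [pi_gt_three]
  have hu' : |u| < π / 2 := abs_lt_of_sq_lt_sq (by linarith [sq_nonneg u]) (by positivity)
  have hv' : |v| < π / 2 := abs_lt_of_sq_lt_sq hv (by positivity)
  have hc : ∀ k : ℕ, (π / 2) ^ 2 ≤ (((k : ℝ) + 1 / 2) * π) ^ 2 := fun k =>
    pow_le_pow_left₀ (by positivity) (pi_div_two_le_add_half_mul_pi k) 2
  rw [log_div (cos_pos_of_mem_Ioo (abs_lt.1 hv')).ne' (cos_pos_of_mem_Ioo (abs_lt.1 hu')).ne']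
  refine ((hasSum_log_one_sub_sq_div_log_cos hv').sub
    (hasSum_log_one_sub_sq_div_log_cos hu')).congr_fun fun k => ?_
  rw [mul_comm _ (sin θ), ← div_div]
  exact tsum_alternating_sub_tsum_eq_log_sub_log (hu.trans_le (hc k)) (hv.trans_le (hc k))

/-- Dirichlet series decomposition for the twisted Euler–Ramanujan identity:
for `sin θ ≠ 0`, `|x - y cot θ| < π/(2√2)`, `|y / sin θ| < √(π/2)`,
`log (cos (y/sin θ) / cos (x - y cot θ))
  = ∑_{k=1}^∞ [L_k(1, (x - y cot θ)²/(c_k² - (x - y cot θ)²)) - M_k(1, (y/(c_k sin θ))²)]`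
where `c_k = (k - 1/2)π`, `L_k(1,a) = ∑_{n=1}^∞ (-1)^{n+1} aⁿ/n`,
`M_k(1,b) = ∑_{n=1}^∞ bⁿ/n`.  The outer index `k : ℕ` corresponds to the
original `k + 1` and the inner index `n : ℕ` to the original `n + 1`. -/
theorem twisted_euler_ramanujan_dirichlet (θ x y : ℝ) (hθ : Real.sin θ ≠ 0)
    (hx : |x - y * Real.cot θ| < Real.pi / (2 * Real.sqrt 2))
    (hy : |y / Real.sin θ| < Real.sqrt (Real.pi / 2)) :
    HasSum
      (fun k : ℕ =>
        (∑' n : ℕ, (-1 : ℝ) ^ n *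
            ((x - y * Real.cot θ) ^ 2 /
              ((((k : ℝ) + 1 / 2) * Real.pi) ^ 2 - (x - y * Real.cot θ) ^ 2)) ^ (n + 1) /
            ((n : ℝ) + 1)) -
        (∑' n : ℕ,
            ((y / ((((k : ℝ) + 1 / 2) * Real.pi) * Real.sin θ)) ^ 2) ^ (n + 1) /
            ((n : ℝ) + 1)))
      (Real.log (Real.cos (y / Real.sin θ) / Real.cos (x - y * Real.cot θ))) :=
  twisted_euler_ramanujan_dirichlet_general θ x y hx hy
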